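/- Let 0<β<1 and 0≤λ<1. For every f ∈ F(λ,β) and every z ∈ D, one has |f''(z)/f'(z) - c(z,λ,β)| ≤ r(z,λ,β), where c(z,λ,β) = 2(1-β)(λ(1-|z|²)+(|z|²-λ²)·conj(z)) / ((1-|z|²)(1-2λ Re z+|z|²)) and r(z,λ,β) = 2(1-β)(1-λ²)|z| / ((1-|z|²)(1-2λ Re z+|z|²)). -/

import Mathlib

open Complex Set MeasureTheory

noncomputable section

/-- The open unit disk in the complex plane. -/
def unitDisk : Set ℂ := {z : ℂ | ‖z‖ < 1}

/-- Integral of `g` along the segment from `0` to `z0`: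
`∫_0^{z0} g(ξ) dξ = ∫_0^1 z0 · g(t z0) dt`. -/
def segInt (g : ℂ → ℂ) (z0 : ℂ) : ℂ :=
  ∫ t in (0:ℝ)..1, z0 * g ((t : ℂ) * z0)

/-- The branch of `log f'` vanishing at the origin, evaluated at `z0`:
`log f'(z0) = ∫_0^{z0} f''(ξ)/f'(ξ) dξ`. -/
def logDerivAt (f : ℂ → ℂ) (z0 : ℂ) : ℂ :=
  segInt (fun ξ => deriv (deriv f) ξ / deriv f ξ) z0

/-- The class `F(λ,β)`: analytic `f` on the unit disk with `f(0)=0`, `f'(0)=1`,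
`f''(0)=2λ(1-β)`, nonvanishing derivative, and `Re(1 + z f''(z)/f'(z)) > β`. -/
def IsInF (lam beta : ℝ) (f : ℂ → ℂ) : Prop :=
  DifferentiableOn ℂ f unitDisk ∧ f 0 = 0 ∧ deriv f 0 = 1 ∧
    deriv (deriv f) 0 = 2 * (lam : ℂ) * (1 - (beta : ℂ)) ∧
    (∀ z ∈ unitDisk, deriv f z ≠ 0) ∧
    (∀ z ∈ unitDisk, beta < (1 + z * deriv (deriv f) z / deriv f z).re)

/-- The region of variability `V(z0,λ,β) = {log f'(z0) : f ∈ F(λ,β)}`. -/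
def V (z0 : ℂ) (lam beta : ℝ) : Set ℂ :=
  {w : ℂ | ∃ f : ℂ → ℂ, IsInF lam beta f ∧ logDerivAt f z0 = w}

/-- The center function `c(z,λ,β)`. -/
def cval (z : ℂ) (lam beta : ℝ) : ℂ :=
  ((2 * (1 - beta) : ℝ) : ℂ) *
    (((lam * (1 - ‖z‖ ^ 2) : ℝ) : ℂ) +
      ((‖z‖ ^ 2 - lam ^ 2 : ℝ) : ℂ) * (starRingEnd ℂ) z) /
    (((1 - ‖z‖ ^ 2) * (1 - 2 * lam * z.re + ‖z‖ ^ 2) : ℝ) : ℂ)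

/-- The radius function `r(z,λ,β)`. -/
def rval (z : ℂ) (lam beta : ℝ) : ℝ :=
  2 * (1 - beta) * (1 - lam ^ 2) * ‖z‖ /
    ((1 - ‖z‖ ^ 2) * (1 - 2 * lam * z.re + ‖z‖ ^ 2))

/-!
Put `g = f''/f'` and `c = 2(1-β)`. Since `Re (z g) > -c/2`, the function `z g / (c + z g)` maps
the disk into itself and vanishes at `0`, so by the Schwarz lemma `φ = g / (c + z g)` is bounded
by `1`, and `φ 0 = λ`. Composing `φ` with the disk automorphism `w ↦ (w - λ) / (1 - λ w)` and
applying the Schwarz lemma once more gives `v` with `|v| ≤ |z|` and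
`g z = c (v + λ) / ((λ - z) v + 1 - λ z)`. This Möbius map sends the disk `|v| ≤ |z|` onto the
disk with centre `c(z,λ,β)` and radius `r(z,λ,β)`.
-/

open Metric ComplexConjugate

theorem norm_conj_mul_add_sq_mul_conj_le {c d v : ℂ} {ρ : ℝ} (hρ : 0 ≤ ρ)
    (hcd : ρ ^ 2 * ‖c‖ ^ 2 ≤ ‖d‖ ^ 2) (hv : ‖v‖ ≤ ρ) :
    ‖conj d * v + ρ ^ 2 * conj c‖ ≤ ρ * ‖c * v + d‖ := by
  refine (pow_le_pow_iff_left₀ (norm_nonneg _) (by positivity) two_ne_zero).mp ?_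
  have hv2 : ‖v‖ ^ 2 ≤ ρ ^ 2 := pow_le_pow_left₀ (norm_nonneg v) hv 2
  have hcross : (conj d * v * conj (↑(ρ ^ 2) * conj c)).re = ρ ^ 2 * (c * v * conj d).re := by
    rw [map_mul, conj_conj, conj_ofReal, ← re_ofReal_mul]
    ring_nf
  rw [mul_pow, Complex.sq_norm, Complex.sq_norm, normSq_add, normSq_add, ← ofReal_pow, hcross]
  simp only [← Complex.sq_norm, norm_mul, Complex.norm_conj, norm_real,
    Real.norm_of_nonneg (sq_nonneg ρ), mul_pow]
  -- the difference of the two sides is `(‖d‖² - ρ²‖c‖²)(ρ² - ‖v‖²)`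
  nlinarith [mul_nonneg (sub_nonneg.2 hcd) (sub_nonneg.2 hv2)]

theorem norm_sub_center_le_of_mul_eq {a b c d v w : ℂ} {ρ : ℝ} (hρ : 0 ≤ ρ)
    (hcd : ρ ^ 2 * ‖c‖ ^ 2 < ‖d‖ ^ 2) (hv : ‖v‖ ≤ ρ) (hw : w * (c * v + d) = a * v + b) :
    ‖w - (b * conj d - ρ ^ 2 * a * conj c) / ((‖d‖ ^ 2 - ρ ^ 2 * ‖c‖ ^ 2 : ℝ) : ℂ)‖ ≤
      ρ * ‖a * d - b * c‖ / (‖d‖ ^ 2 - ρ ^ 2 * ‖c‖ ^ 2) := by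
  set D := ‖d‖ ^ 2 - ρ ^ 2 * ‖c‖ ^ 2
  have hD : 0 < D := sub_pos.2 hcd
  have hne : c * v + d ≠ 0 := by
    have hcv : ‖c * v‖ < ‖d‖ := by
      rw [norm_mul, mul_comm]
      refine (mul_le_mul_of_nonneg_right hv (norm_nonneg c)).trans_lt ?_
      exact lt_of_pow_lt_pow_left₀ 2 (norm_nonneg d) (by rwa [mul_pow])
    intro h
    rw [eq_neg_of_add_eq_zero_right h, norm_neg] at hcv
    exact lt_irrefl _ hcv
  rw [eq_div_of_mul_eq hne hw]
  have hkey : (a * v + b) / (c * v + d) - (b * conj d - ρ ^ 2 * a * conj c) / (D : ℂ) =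
      (a * d - b * c) * (conj d * v + ρ ^ 2 * conj c) / ((c * v + d) * D) := by
    rw [div_sub_div _ _ hne (ofReal_ne_zero.2 hD.ne')]
    congr 1
    simp only [D, ofReal_sub, ofReal_mul, ofReal_pow, ← mul_conj']
    ring
  rw [hkey, norm_div, norm_mul, norm_mul, norm_real, Real.norm_of_nonneg hD.le,
    div_le_div_iff₀ (mul_pos (norm_pos_iff.2 hne) hD) hD]
  calc ‖a * d - b * c‖ * ‖conj d * v + ρ ^ 2 * conj c‖ * D
      ≤ ‖a * d - b * c‖ * (ρ * ‖c * v + d‖) * D := by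
        gcongr
        exact norm_conj_mul_add_sq_mul_conj_le hρ hcd.le hv
    _ = ρ * ‖a * d - b * c‖ * (‖c * v + d‖ * D) := by ring

theorem norm_one_sub_mul_sq_sub (lam : ℝ) (z : ℂ) :
    ‖1 - lam * z‖ ^ 2 - ‖z‖ ^ 2 * ‖lam - z‖ ^ 2 =
      (1 - ‖z‖ ^ 2) * (1 - 2 * lam * z.re + ‖z‖ ^ 2) := by
  simp only [Complex.sq_norm, normSq_apply, sub_re, sub_im, mul_re, mul_im, one_re, one_im,
    ofReal_re, ofReal_im]
  ring

theorem one_sub_two_mul_re_add_sq_pos {lam : ℝ} {z : ℂ} (hlam : |lam| ≤ 1) (hz : ‖z‖ < 1) :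
    0 < 1 - 2 * lam * z.re + ‖z‖ ^ 2 := by
  have h : lam * z.re ≤ ‖z‖ := (le_abs_self _).trans <| by
    simpa [abs_mul] using mul_le_mul hlam (abs_re_le_norm z) (abs_nonneg _) zero_le_one
  nlinarith [sq_pos_of_pos (sub_pos.2 hz)]

theorem norm_sub_cval_le_of_mul_eq {beta lam : ℝ} {z v w : ℂ} (hbeta : beta < 1)
    (hlam : |lam| ≤ 1) (hz : ‖z‖ < 1) (hv : ‖v‖ ≤ ‖z‖)
    (hw : w * ((lam - z) * v + (1 - lam * z)) = (2 * (1 - beta) : ℝ) * (v + lam)) :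
    ‖w - cval z lam beta‖ ≤ rval z lam beta := by
  set c : ℂ := ((2 * (1 - beta) : ℝ) : ℂ)
  have hD := norm_one_sub_mul_sq_sub lam z
  have hpos : 0 < (1 - ‖z‖ ^ 2) * (1 - 2 * lam * z.re + ‖z‖ ^ 2) :=
    mul_pos (by nlinarith [norm_nonneg z]) (one_sub_two_mul_re_add_sq_pos hlam hz)
  have hcval : cval z lam beta = (c * lam * conj (1 - lam * z) - ‖z‖ ^ 2 * c * conj (lam - z)) /
      ((‖1 - lam * z‖ ^ 2 - ‖z‖ ^ 2 * ‖lam - z‖ ^ 2 : ℝ) : ℂ) := by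
    rw [cval, hD]
    congr 1
    simp only [c, map_sub, map_mul, map_one, conj_ofReal]
    push_cast
    ring
  have hrval : rval z lam beta = ‖z‖ * ‖c * (1 - lam * z) - c * lam * (lam - z)‖ /
      (‖1 - lam * z‖ ^ 2 - ‖z‖ ^ 2 * ‖lam - z‖ ^ 2) := by
    have h : c * (1 - lam * z) - c * lam * (lam - z) =
        ((2 * (1 - beta) * (1 - lam ^ 2) : ℝ) : ℂ) := by
      simp only [c]; push_cast; ring
    have hlam2 : 0 ≤ 1 - lam ^ 2 := by nlinarith [sq_abs lam, abs_nonneg lam]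
    rw [rval, hD, h, norm_real, Real.norm_of_nonneg (by positivity)]
    ring
  rw [hcval, hrval]
  exact norm_sub_center_le_of_mul_eq (norm_nonneg z) (by linarith) hv (by rw [hw]; ring)

section DiskAutomorphism

variable {a w : ℂ}

theorem one_sub_conj_mul_ne_zero (ha : ‖a‖ < 1) (hw : ‖w‖ ≤ 1) : 1 - conj a * w ≠ 0 := by
  have h : ‖conj a * w‖ < 1 := by
    rw [norm_mul, Complex.norm_conj]
    nlinarith [norm_nonneg a, norm_nonneg w]
  intro h0
  rw [← eq_of_sub_eq_zero h0, norm_one] at h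
  exact lt_irrefl _ h

theorem norm_sub_le_norm_one_sub_conj_mul (ha : ‖a‖ < 1) (hw : ‖w‖ ≤ 1) :
    ‖w - a‖ ≤ ‖1 - conj a * w‖ := by
  have ha2 : ‖a‖ ^ 2 ≤ 1 := by nlinarith [norm_nonneg a]
  have hw2 : ‖w‖ ^ 2 ≤ 1 := by nlinarith [norm_nonneg w]
  refine (pow_le_pow_iff_left₀ (norm_nonneg _) (norm_nonneg _) two_ne_zero).mp ?_
  simp only [Complex.sq_norm, normSq_apply, sub_re, sub_im, mul_re, mul_im, one_re, one_im,
    conj_re, conj_im] at ha2 hw2 ⊢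
  nlinarith [mul_nonneg (sub_nonneg.2 ha2) (sub_nonneg.2 hw2)]

theorem mul_one_add_conj_mul_div_eq (hw : 1 - conj a * w ≠ 0) :
    w * (1 + conj a * ((w - a) / (1 - conj a * w))) = (w - a) / (1 - conj a * w) + a := by
  rw [mul_div_assoc', one_add_div hw, mul_div_assoc', div_add' _ _ _ hw]
  ring

end DiskAutomorphism

theorem mapsTo_closedBall_of_mapsTo_id_mul {φ : ℂ → ℂ} (hφ : DifferentiableOn ℂ φ (ball 0 1))
    (hmaps : MapsTo (fun ξ ↦ ξ * φ ξ) (ball 0 1) (closedBall 0 1)) :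
    MapsTo φ (ball 0 1) (closedBall 0 1) := by
  intro z hz
  have hdslope : dslope (fun ξ ↦ ξ * φ ξ) 0 z = φ z := by
    rcases eq_or_ne z 0 with rfl | hz0
    · have hφ0 := (hφ.differentiableAt (ball_mem_nhds 0 one_pos)).hasDerivAt
      simpa using ((hasDerivAt_id' (0 : ℂ)).fun_mul hφ0).deriv
    · simpa using dslope_sub_smul_of_ne φ hz0
  have h := norm_dslope_le_div_of_mapsTo_ball (f := fun ξ ↦ ξ * φ ξ)
    (differentiableOn_id.fun_mul hφ) (by simpa using hmaps) hz
  rwa [hdslope, div_one, ← mem_closedBall_zero_iff] at h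

theorem exists_norm_le_mul_one_add_conj_mul_eq {φ : ℂ → ℂ} {z : ℂ}
    (hφ : DifferentiableOn ℂ φ (ball 0 1)) (hmaps : MapsTo φ (ball 0 1) (closedBall 0 1))
    (h0 : ‖φ 0‖ < 1) (hz : z ∈ ball 0 1) :
    ∃ v : ℂ, ‖v‖ ≤ ‖z‖ ∧ φ z * (1 + conj (φ 0) * v) = v + φ 0 := by
  set a := φ 0
  have hne : ∀ ξ ∈ ball (0 : ℂ) 1, 1 - conj a * φ ξ ≠ 0 := fun ξ hξ ↦
    one_sub_conj_mul_ne_zero h0 (mem_closedBall_zero_iff.1 (hmaps hξ))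
  set ψ : ℂ → ℂ := fun ξ ↦ (φ ξ - a) / (1 - conj a * φ ξ)
  have hψ : DifferentiableOn ℂ ψ (ball 0 1) :=
    (hφ.sub_const a).div ((differentiableOn_const 1).sub (hφ.const_mul _)) hne
  have hψmaps : MapsTo ψ (ball 0 1) (closedBall 0 1) := fun ξ hξ ↦ by
    rw [mem_closedBall_zero_iff, norm_div, div_le_one (norm_pos_iff.2 (hne ξ hξ))]
    exact norm_sub_le_norm_one_sub_conj_mul h0 (mem_closedBall_zero_iff.1 (hmaps hξ))
  have hψ0 : ψ 0 = 0 := by simp [ψ, a]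
  exact ⟨ψ z, Complex.norm_le_norm_of_mapsTo_ball hψ hψmaps hψ0 (mem_ball_zero_iff.1 hz),
    mul_one_add_conj_mul_div_eq (hne z hz)⟩

theorem norm_lt_norm_ofReal_add {c : ℝ} {w : ℂ} (hc : 0 < c) (hw : -(c / 2) < w.re) :
    ‖w‖ < ‖c + w‖ := by
  refine (pow_lt_pow_iff_left₀ (norm_nonneg _) (norm_nonneg _) two_ne_zero).mp ?_
  simp only [Complex.sq_norm, normSq_apply, add_re, add_im, ofReal_re, ofReal_im, zero_add]
  nlinarith

theorem exists_norm_le_mul_eq_of_neg_half_lt_re {c : ℝ} {a z : ℂ} {g : ℂ → ℂ} (hc : 0 < c)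
    (hg : DifferentiableOn ℂ g (ball 0 1)) (hre : ∀ ξ ∈ ball (0 : ℂ) 1, -(c / 2) < (ξ * g ξ).re)
    (hg0 : g 0 = c * a) (ha : ‖a‖ < 1) (hz : z ∈ ball 0 1) :
    ∃ v : ℂ, ‖v‖ ≤ ‖z‖ ∧ g z * ((conj a - z) * v + (1 - a * z)) = c * (v + a) := by
  have hQ : ∀ ξ ∈ ball (0 : ℂ) 1, (c : ℂ) + ξ * g ξ ≠ 0 := fun ξ hξ ↦
    norm_pos_iff.1 ((norm_nonneg _).trans_lt (norm_lt_norm_ofReal_add hc (hre ξ hξ)))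
  set φ : ℂ → ℂ := fun ξ ↦ g ξ / (c + ξ * g ξ)
  have hφ : DifferentiableOn ℂ φ (ball 0 1) :=
    hg.div ((differentiableOn_const _).add (differentiableOn_id.fun_mul hg)) hQ
  have hmaps : MapsTo φ (ball 0 1) (closedBall 0 1) := by
    refine mapsTo_closedBall_of_mapsTo_id_mul hφ fun ξ hξ ↦ ?_
    simp only [mem_closedBall_zero_iff, φ]
    rw [mul_div_assoc', norm_div, div_le_one (norm_pos_iff.2 (hQ ξ hξ))]
    exact (norm_lt_norm_ofReal_add hc (hre ξ hξ)).le
  have hφ0 : φ 0 = a := by simp [φ, hg0, ofReal_ne_zero.2 hc.ne']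
  obtain ⟨v, hv, hφz⟩ := exists_norm_le_mul_one_add_conj_mul_eq hφ hmaps (hφ0 ▸ ha) hz
  rw [hφ0, div_mul_eq_mul_div, div_eq_iff (hQ z hz)] at hφz
  exact ⟨v, hv, by linear_combination hφz⟩

theorem unitDisk_eq_ball : unitDisk = ball 0 1 := by
  ext z
  simp [unitDisk]

/-- for `f ∈ F(λ,β)` with `0 ≤ λ < 1` and `z ∈ D`,
`|f''(z)/f'(z) - c(z,λ,β)| ≤ r(z,λ,β)`. -/
theorem dist_logderiv_le (beta lam : ℝ) (hbeta : 0 < beta ∧ beta < 1)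
    (hlam : 0 ≤ lam ∧ lam < 1) (f : ℂ → ℂ) (hf : IsInF lam beta f)
    (z : ℂ) (hz : z ∈ unitDisk) :
    ‖deriv (deriv f) z / deriv f z - cval z lam beta‖ ≤ rval z lam beta := by
  obtain ⟨hfd, -, hf'0, hf''0, hf'ne, hre⟩ := hf
  rw [unitDisk_eq_ball] at hfd hf'ne hre hz
  have hg : DifferentiableOn ℂ (fun ξ ↦ deriv (deriv f) ξ / deriv f ξ) (ball 0 1) :=
    ((hfd.deriv isOpen_ball).deriv isOpen_ball).div (hfd.deriv isOpen_ball) hf'ne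
  have hgre : ∀ ξ ∈ ball (0 : ℂ) 1,
      -(2 * (1 - beta) / 2) < (ξ * (deriv (deriv f) ξ / deriv f ξ)).re := fun ξ hξ ↦ by
    have h := hre ξ hξ
    rw [mul_div_assoc, add_re, one_re] at h
    linarith
  have hg0 : deriv (deriv f) 0 / deriv f 0 = ((2 * (1 - beta) : ℝ) : ℂ) * lam := by
    rw [hf''0, hf'0]
    push_cast
    ring
  have hlam' : ‖(lam : ℂ)‖ < 1 := by
    rw [norm_real, Real.norm_of_nonneg hlam.1]
    exact hlam.2
  obtain ⟨v, hv, hgz⟩ := exists_norm_le_mul_eq_of_neg_half_lt_re (by linarith) hg hgre hg0 hlam' hz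
  rw [conj_ofReal] at hgz
  exact norm_sub_cval_le_of_mul_eq hbeta.2 (abs_le.2 ⟨by linarith, hlam.2.le⟩)
    (mem_ball_zero_iff.1 hz) hv hgz
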